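/- Let R be a commutative ring and let a, b : ℕ → R be sequences with a(0) = 1 and b(0) = 1. Assume that N_j · a(j) = 0 and N_j · b(j) = 0 in R for every j ≥ 1. Then for every l ≥ 1 one has N_l · (∑_{j+k=l} a(j)·b(k)) = 0 in R. -/

import Mathlib

/-!
In `∑_{j+k=l} a j * b k` the terms with `j = 0` or `k = 0` are `b l` and `a l`, killed by
`N l` by hypothesis. Every other product is killed by both `N j` and `N k`, hence by
`gcd (N j) (N k)`, and this gcd divides `N (j + k)`: if `j` or `k` is odd the gcd divides `2`,
which divides every `N l`; if both are even one compares exponents prime by prime,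
using `min (v_p j) (v_p k) ≤ v_p (j + k)` and `(p - 1) ∣ j, k → (p - 1) ∣ j + k`.
-/

/-- For `t ∈ ℕ`: `N 0 = 0`; `N t = 2` for odd `t`;
`N t = 2 * ∏_{p prime, (p-1) ∣ t} p^(v_p(t)+1)` for even positive `t`.
(Any prime `p` with `(p-1) ∣ t` satisfies `p ≤ t + 1 < t + 2`.) -/
def Npaper (t : ℕ) : ℕ :=
  if t = 0 then 0
  else if t % 2 = 1 then 2
  else 2 * ∏ p ∈ Finset.filter (fun p => p.Prime ∧ (p - 1) ∣ t) (Finset.range (t + 2)),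
      p ^ (t.factorization p + 1)

theorem nsmul_mul_eq_zero_of_gcd_dvd {R : Type*} [NonUnitalNonAssocSemiring R] {m n d : ℕ}
    {x y : R} (hx : m • x = 0) (hy : n • y = 0) (hd : Nat.gcd m n ∣ d) : d • (x * y) = 0 := by
  have hm : addOrderOf (x * y) ∣ m :=
    addOrderOf_dvd_of_nsmul_eq_zero (by rw [← smul_mul_assoc, hx, zero_mul])
  have hn : addOrderOf (x * y) ∣ n :=
    addOrderOf_dvd_of_nsmul_eq_zero (by rw [← mul_smul_comm, hy, mul_zero])
  exact addOrderOf_dvd_iff_nsmul_eq_zero.mp ((Nat.dvd_gcd hm hn).trans hd)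

theorem nsmul_sum_antidiagonal_eq_zero {R : Type*} [NonAssocSemiring R] (N : ℕ → ℕ)
    (hN : ∀ j k, 1 ≤ j → 1 ≤ k → Nat.gcd (N j) (N k) ∣ N (j + k)) {a b : ℕ → R}
    (ha0 : a 0 = 1) (hb0 : b 0 = 1)
    (ha : ∀ j, 1 ≤ j → N j • a j = 0) (hb : ∀ j, 1 ≤ j → N j • b j = 0)
    {l : ℕ} (hl : 1 ≤ l) :
    N l • (∑ p ∈ Finset.HasAntidiagonal.antidiagonal l, a p.1 * b p.2) = 0 := by
  rw [Finset.smul_sum]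
  refine Finset.sum_eq_zero ?_
  rintro ⟨j, k⟩ hjk
  obtain rfl : j + k = l := Finset.HasAntidiagonal.mem_antidiagonal.mp hjk
  rcases Nat.eq_zero_or_pos j with rfl | hj
  · rw [ha0, one_mul, zero_add]
    exact hb k (by omega)
  rcases Nat.eq_zero_or_pos k with rfl | hk
  · rw [hb0, mul_one]
    exact ha j hl
  exact nsmul_mul_eq_zero_of_gcd_dvd (ha j hj) (hb k hk) (hN j k hj hk)

theorem min_factorization_le_factorization_add {p : ℕ} (hp : p.Prime) (j k : ℕ) :
    min (j.factorization p) (k.factorization p) ≤ (j + k).factorization p := by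
  rcases eq_or_ne (j + k) 0 with hjk | hjk
  · obtain ⟨rfl, rfl⟩ := Nat.add_eq_zero_iff.mp hjk
    simp
  rw [← hp.pow_dvd_iff_le_factorization hjk]
  exact dvd_add ((pow_dvd_pow p (min_le_left _ _)).trans (Nat.ordProj_dvd j p))
    ((pow_dvd_pow p (min_le_right _ _)).trans (Nat.ordProj_dvd k p))

theorem Npaper_of_odd {t : ℕ} (ht : Odd t) : Npaper t = 2 := by
  simp [Npaper, ht.pos.ne', Nat.odd_iff.mp ht]

theorem Npaper_of_even {t : ℕ} (h0 : t ≠ 0) (ht : Even t) :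
    Npaper t = 2 * ∏ p ∈ Finset.filter (fun p => p.Prime ∧ (p - 1) ∣ t) (Finset.range (t + 2)),
      p ^ (t.factorization p + 1) := by
  simp [Npaper, h0, Nat.even_iff.mp ht]

theorem two_dvd_Npaper {t : ℕ} (ht : t ≠ 0) : 2 ∣ Npaper t := by
  rcases Nat.even_or_odd t with he | ho
  · rw [Npaper_of_even ht he]
    exact dvd_mul_right _ _
  · rw [Npaper_of_odd ho]

theorem Npaper_ne_zero {t : ℕ} (ht : t ≠ 0) : Npaper t ≠ 0 := by
  rcases Nat.even_or_odd t with he | ho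
  · rw [Npaper_of_even ht he]
    refine mul_ne_zero two_ne_zero (Finset.prod_ne_zero_iff.mpr fun p hp => ?_)
    exact pow_ne_zero _ (Finset.mem_filter.mp hp).2.1.ne_zero
  · rw [Npaper_of_odd ho]
    exact two_ne_zero

def Npaper.exponent (t q : ℕ) : ℕ :=
  if q.Prime ∧ (q - 1) ∣ t then t.factorization q + 1 else 0

theorem Npaper.mem_primes_iff {t q : ℕ} (ht : t ≠ 0) :
    q ∈ Finset.filter (fun p => p.Prime ∧ (p - 1) ∣ t) (Finset.range (t + 2)) ↔
      q.Prime ∧ (q - 1) ∣ t := by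
  refine Finset.mem_filter.trans ⟨And.right, fun h => ⟨?_, h⟩⟩
  have := Nat.le_of_dvd (Nat.pos_of_ne_zero ht) h.2
  have := h.1.two_le
  rw [Finset.mem_range]
  omega

theorem factorization_Npaper {t : ℕ} (h0 : t ≠ 0) (ht : Even t) (q : ℕ) :
    (Npaper t).factorization q = Finsupp.single 2 1 q + Npaper.exponent t q := by
  set S := Finset.filter (fun p => p.Prime ∧ (p - 1) ∣ t) (Finset.range (t + 2))
  have hS : ∀ p ∈ S, p ^ (t.factorization p + 1) ≠ 0 := fun p hp =>
    pow_ne_zero _ (Finset.mem_filter.mp hp).2.1.ne_zero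
  have hpow : ∀ p ∈ S, (p ^ (t.factorization p + 1)).factorization q =
      if p = q then t.factorization p + 1 else 0 := by
    intro p hp
    rw [Nat.factorization_pow, (Finset.mem_filter.mp hp).2.1.factorization,
      Finsupp.smul_apply, Finsupp.single_apply]
    split_ifs <;> simp
  rw [Npaper_of_even h0 ht, Nat.factorization_mul two_ne_zero (Finset.prod_ne_zero_iff.mpr hS),
    Nat.factorization_prod hS, Nat.prime_two.factorization, Finsupp.add_apply,
    Finsupp.finsetSum_apply, Finset.sum_congr rfl hpow, Finset.sum_ite_eq', Npaper.exponent]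
  simp only [Npaper.mem_primes_iff h0, S]

theorem Npaper.min_exponent_le_exponent_add (j k q : ℕ) :
    min (exponent j q) (exponent k q) ≤ exponent (j + k) q := by
  unfold exponent
  by_cases hqj : q.Prime ∧ (q - 1) ∣ j
  · by_cases hqk : q.Prime ∧ (q - 1) ∣ k
    · rw [if_pos hqj, if_pos hqk, if_pos ⟨hqj.1, dvd_add hqj.2 hqk.2⟩]
      have := min_factorization_le_factorization_add hqj.1 j k
      omega
    · simp [hqk]
  · simp [hqj]

theorem gcd_Npaper_dvd_Npaper_add {j k : ℕ} (hj : j ≠ 0) (hk : k ≠ 0) :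
    Nat.gcd (Npaper j) (Npaper k) ∣ Npaper (j + k) := by
  have hjk : j + k ≠ 0 := by omega
  rcases Nat.even_or_odd j with hje | hjo
  · rcases Nat.even_or_odd k with hke | hko
    · rw [← Nat.factorization_le_iff_dvd (Nat.gcd_ne_zero_left (Npaper_ne_zero hj))
        (Npaper_ne_zero hjk), Nat.factorization_gcd (Npaper_ne_zero hj) (Npaper_ne_zero hk)]
      intro q
      rw [Finsupp.inf_apply, factorization_Npaper hj hje, factorization_Npaper hk hke,
        factorization_Npaper hjk (hje.add hke)]
      have := Npaper.min_exponent_le_exponent_add j k q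
      omega
    · exact (Nat.gcd_dvd_right _ _).trans ((Npaper_of_odd hko).symm ▸ two_dvd_Npaper hjk)
  · exact (Nat.gcd_dvd_left _ _).trans ((Npaper_of_odd hjo).symm ▸ two_dvd_Npaper hjk)

/-- If `a 0 = b 0 = 1` and `N j • a j = 0`, `N j • b j = 0` for all `j ≥ 1`, then
`N l • (∑_{j+k=l} a j * b k) = 0` for all `l ≥ 1`. -/
theorem stmt_5 {R : Type*} [CommRing R] (a b : ℕ → R)
    (ha0 : a 0 = 1) (hb0 : b 0 = 1)
    (ha : ∀ j, 1 ≤ j → Npaper j • a j = 0)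
    (hb : ∀ j, 1 ≤ j → Npaper j • b j = 0) :
    ∀ l, 1 ≤ l → Npaper l • (∑ p ∈ Finset.HasAntidiagonal.antidiagonal l, a p.1 * b p.2) = 0 :=
  fun _ hl => nsmul_sum_antidiagonal_eq_zero Npaper
    (fun _ _ hj hk => gcd_Npaper_dvd_Npaper_add (by omega) (by omega)) ha0 hb0 ha hb hl
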